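/- arXiv:1512.02894 — 2 statements merged into one kernel-verified Lean document; each statement's English description precedes it below -/
import Mathlib

section
/- Let μ, ν be atomless probability measures on ℝ, b > 0, and c(x,y) = min(x, b·y). If π ∈ Π(μ,ν) is an optimal coupling for c (i.e., it minimizes ∫ c dπ over Π(μ,ν)) and its support is c-cyclically monotone, then there exists s ∈ ℝ such that supp(π) ⊆ {x ≤ s, y ≥ s/b} ∪ {x ≥ s, y ≤ s/b}. -/
/-!
Two-point cyclical monotonicity for `c(x, y) = min x (b * y)` forbids `min` at one point of the
support from exceeding `max` at another, so every interval `[min x (b * y), max x (b * y)]` with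
`(x, y)` in the support contains the supremum `s` of all the minima. Since `b > 0`, the condition
`min x (b * y) ≤ s ≤ max x (b * y)` says exactly that `(x, y)` lies in one of the two quadrants
at `(s, s / b)`.
-/

open MeasureTheory Finset

def msupport (π : Measure (ℝ × ℝ)) : Set (ℝ × ℝ) :=
  {p | ∀ U : Set (ℝ × ℝ), IsOpen U → p ∈ U → 0 < π U}

def IsCoupling (π : Measure (ℝ × ℝ)) (μ ν : Measure ℝ) : Prop :=
  IsProbabilityMeasure π ∧ π.map Prod.fst = μ ∧ π.map Prod.snd = ν

/-- `π` is an optimal coupling of `μ` and `ν` for the cost `c`. -/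
def IsOptimalCoupling (c : ℝ × ℝ → ℝ) (μ ν : Measure ℝ) (π : Measure (ℝ × ℝ)) : Prop :=
  IsCoupling π μ ν ∧ ∀ ρ : Measure (ℝ × ℝ), IsCoupling ρ μ ν → ∫ p, c p ∂π ≤ ∫ p, c p ∂ρ

def CCyclicallyMonotone (c : ℝ → ℝ → ℝ) (S : Set (ℝ × ℝ)) : Prop :=
  ∀ (n : ℕ) (p : Fin (n + 1) → ℝ × ℝ), (∀ i, p i ∈ S) →
    ∑ i : Fin (n + 1), c (p i).1 (p i).2 ≤ ∑ i : Fin (n + 1), c (p i).1 (p (i - 1)).2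

theorem CCyclicallyMonotone.add_le_add_swap {c : ℝ → ℝ → ℝ} {S : Set (ℝ × ℝ)}
    (hc : CCyclicallyMonotone c S) {p q : ℝ × ℝ} (hp : p ∈ S) (hq : q ∈ S) :
    c p.1 p.2 + c q.1 q.2 ≤ c p.1 q.2 + c q.1 p.2 := by
  simpa [Fin.sum_univ_two] using hc 1 ![p, q] (Fin.forall_fin_two.2 ⟨hp, hq⟩)

theorem min_le_max_of_min_add_min_le_min_add_min {a b c d : ℝ}
    (h : min a b + min c d ≤ min a d + min c b) : min a b ≤ max c d := by
  by_contra! hlt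
  have hda : d < a := (le_max_right c d).trans_lt (hlt.trans_le (min_le_left a b))
  have hcb : c < b := (le_max_left c d).trans_lt (hlt.trans_le (min_le_right a b))
  rw [min_eq_right hda.le, min_eq_left hcb.le] at h
  linarith [min_add_max c d]

theorem exists_forall_min_le_and_le_max {ι α : Type*} [ConditionallyCompleteLinearOrder α]
    {S : Set ι} {u v : ι → α} (h : ∀ i ∈ S, ∀ j ∈ S, min (u i) (v i) ≤ max (u j) (v j)) :
    ∃ s, ∀ i ∈ S, min (u i) (v i) ≤ s ∧ s ≤ max (u i) (v i) := by
  refine ⟨sSup ((fun i => min (u i) (v i)) '' S), fun i hi => ⟨?_, ?_⟩⟩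
  · exact le_csSup ⟨max (u i) (v i), Set.forall_mem_image.2 fun j hj => h j hj i hi⟩
      (Set.mem_image_of_mem _ hi)
  · exact csSup_le (Set.image_nonempty.2 ⟨i, hi⟩)
      (Set.forall_mem_image.2 fun j hj => h j hj i hi)

theorem mem_quadrants_of_min_le_of_le_max {b s x y : ℝ} (hb : 0 < b)
    (hmin : min x (b * y) ≤ s) (hmax : s ≤ max x (b * y)) :
    (x ≤ s ∧ s / b ≤ y) ∨ (s ≤ x ∧ y ≤ s / b) := by
  rcases le_total x (b * y) with hxy | hxy
  · rw [min_eq_left hxy] at hmin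
    rw [max_eq_right hxy] at hmax
    exact .inl ⟨hmin, by rwa [div_le_iff₀' hb]⟩
  · rw [min_eq_right hxy] at hmin
    rw [max_eq_left hxy] at hmax
    exact .inr ⟨hmax, by rwa [le_div_iff₀' hb]⟩

theorem stmt4_general (b : ℝ) (hb : 0 < b)
    (π : Measure (ℝ × ℝ))
    (hmono : CCyclicallyMonotone (fun x y => min x (b * y)) (msupport π)) :
    ∃ s : ℝ, msupport π ⊆
      {p : ℝ × ℝ | p.1 ≤ s ∧ s / b ≤ p.2} ∪ {p : ℝ × ℝ | s ≤ p.1 ∧ p.2 ≤ s / b} := by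
  obtain ⟨s, hs⟩ := exists_forall_min_le_and_le_max (u := Prod.fst) (v := fun p => b * p.2)
    fun p hp q hq => min_le_max_of_min_add_min_le_min_add_min (hmono.add_le_add_swap hp hq)
  exact ⟨s, fun p hp => mem_quadrants_of_min_le_of_le_max hb (hs p hp).1 (hs p hp).2⟩

theorem stmt4 (μ ν : Measure ℝ) [IsProbabilityMeasure μ] [IsProbabilityMeasure ν]
    [NullSingletonClass μ] [NullSingletonClass ν] (b : ℝ) (hb : 0 < b)
    (π : Measure (ℝ × ℝ))
    (hopt : IsOptimalCoupling (fun p => min p.1 (b * p.2)) μ ν π)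
    (hmono : CCyclicallyMonotone (fun x y => min x (b * y)) (msupport π)) :
    ∃ s : ℝ, msupport π ⊆
      {p : ℝ × ℝ | p.1 ≤ s ∧ s / b ≤ p.2} ∪ {p : ℝ × ℝ | s ≤ p.1 ∧ p.2 ≤ s / b} :=
  stmt4_general b hb π hmono
end

section
/- Let μ₁, μ₂ be atomless probability measures on ℝ with finite first moments and s ∈ ℝ with μ₁((-∞,s]) + μ₂((-∞,s]) = 1. If π ∈ Π(μ₁,μ₂) is a coupling whose support is contained in {(x,y) : x ≤ s, y ≥ s} ∪ {(x,y) : x ≥ s, y ≤ s}, then ∫ min(x,y) dπ = ∫_{(-∞,s]} x dμ₁ + ∫_{(-∞,s]} y dμ₂; in particular this value does not depend on the choice of such π. -/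
open MeasureTheory

/-!
Off the lines `x = s` and `y = s`, which are `π`-null because the marginals are atomless, every
point of `{x ≤ s ≤ y} ∪ {y ≤ s ≤ x}` satisfies `min x y = x 𝟙{x ≤ s} + y 𝟙{y ≤ s}`. Hence
`min` agrees `π`-a.e. with a sum of a function of `x` and a function of `y`, whose integrals
are computed by the marginals alone.
-/

lemma msupport_eq_support (π : Measure (ℝ × ℝ)) : msupport π = π.support := by
  ext p
  rw [(nhds_basis_opens p).mem_measureSupport]
  simp only [msupport, Set.mem_ofPred_eq, and_imp]
  exact forall_congr' fun U => forall_comm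

lemma ae_mem_of_msupport_subset {π : Measure (ℝ × ℝ)} {S : Set (ℝ × ℝ)}
    (h : msupport π ⊆ S) : ∀ᵐ p ∂π, p ∈ S :=
  Filter.mem_of_superset Measure.support_mem_ae (msupport_eq_support π ▸ h)

lemma min_eq_indicator_Iic_add_indicator_Iic {x y s : ℝ}
    (h : x ≤ s ∧ s ≤ y ∨ s ≤ x ∧ y ≤ s) (hx : x ≠ s) (hy : y ≠ s) :
    min x y = (Set.Iic s).indicator (fun t => t) x + (Set.Iic s).indicator (fun t => t) y := by
  rcases h with ⟨hxs, hsy⟩ | ⟨hsx, hys⟩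
  · have hys : ¬ y ≤ s := fun h => hy (le_antisymm h hsy)
    simp [Set.indicator, hxs, hys, min_eq_left (hxs.trans hsy)]
  · have hxs : ¬ x ≤ s := fun h => hx (le_antisymm h hsx)
    simp [Set.indicator, hxs, hys, min_eq_right (hys.trans hsx)]

namespace IsCoupling

variable {π : Measure (ℝ × ℝ)} {μ ν : Measure ℝ}
  {E : Type*} [NormedAddCommGroup E] {g : ℝ → E}

lemma ae_fst_ne (hπ : IsCoupling π μ ν) [NullSingletonClass μ] (a : ℝ) :
    ∀ᵐ p ∂π, p.1 ≠ a := by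
  obtain ⟨-, rfl, -⟩ := hπ
  exact ae_of_ae_map measurable_fst.aemeasurable (Measure.ae_ne _ a)

lemma ae_snd_ne (hπ : IsCoupling π μ ν) [NullSingletonClass ν] (a : ℝ) :
    ∀ᵐ p ∂π, p.2 ≠ a := by
  obtain ⟨-, -, rfl⟩ := hπ
  exact ae_of_ae_map measurable_snd.aemeasurable (Measure.ae_ne _ a)

lemma integrable_comp_fst (hπ : IsCoupling π μ ν) (hg : Integrable g μ) :
    Integrable (fun p => g p.1) π := by
  obtain ⟨-, rfl, -⟩ := hπ
  exact hg.comp_measurable measurable_fst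

lemma integrable_comp_snd (hπ : IsCoupling π μ ν) (hg : Integrable g ν) :
    Integrable (fun p => g p.2) π := by
  obtain ⟨-, -, rfl⟩ := hπ
  exact hg.comp_measurable measurable_snd

lemma integral_comp_fst [NormedSpace ℝ E] (hπ : IsCoupling π μ ν) (hg : AEStronglyMeasurable g μ) :
    ∫ p, g p.1 ∂π = ∫ x, g x ∂μ := by
  obtain ⟨-, rfl, -⟩ := hπ
  exact (integral_map measurable_fst.aemeasurable hg).symm

lemma integral_comp_snd [NormedSpace ℝ E] (hπ : IsCoupling π μ ν) (hg : AEStronglyMeasurable g ν) :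
    ∫ p, g p.2 ∂π = ∫ y, g y ∂ν := by
  obtain ⟨-, -, rfl⟩ := hπ
  exact (integral_map measurable_snd.aemeasurable hg).symm

end IsCoupling

theorem stmt13_general (μ₁ μ₂ : Measure ℝ)
    [NullSingletonClass μ₁] [NullSingletonClass μ₂]
    (h₁ : Integrable (fun x : ℝ => x) μ₁) (h₂ : Integrable (fun x : ℝ => x) μ₂)
    (s : ℝ)
    (π : Measure (ℝ × ℝ)) (hπ : IsCoupling π μ₁ μ₂)
    (hsupp : msupport π ⊆
      {p : ℝ × ℝ | p.1 ≤ s ∧ s ≤ p.2} ∪ {p : ℝ × ℝ | s ≤ p.1 ∧ p.2 ≤ s}) :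
    ∫ p : ℝ × ℝ, min p.1 p.2 ∂π =
      (∫ x in Set.Iic s, x ∂μ₁) + ∫ y in Set.Iic s, y ∂μ₂ := by
  set I : ℝ → ℝ := (Set.Iic s).indicator fun t => t
  have hI : StronglyMeasurable I := stronglyMeasurable_id.indicator measurableSet_Iic
  have hmin : ∀ᵐ p ∂π, min p.1 p.2 = I p.1 + I p.2 := by
    filter_upwards [ae_mem_of_msupport_subset hsupp, hπ.ae_fst_ne s, hπ.ae_snd_ne s]
      with p hp hx hy
    exact min_eq_indicator_Iic_add_indicator_Iic hp hx hy
  rw [integral_congr_ae hmin,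
    integral_add (hπ.integrable_comp_fst (h₁.indicator measurableSet_Iic))
      (hπ.integrable_comp_snd (h₂.indicator measurableSet_Iic)),
    hπ.integral_comp_fst hI.aestronglyMeasurable,
    hπ.integral_comp_snd hI.aestronglyMeasurable,
    integral_indicator measurableSet_Iic, integral_indicator measurableSet_Iic]

theorem stmt13 (μ₁ μ₂ : Measure ℝ) [IsProbabilityMeasure μ₁] [IsProbabilityMeasure μ₂]
    [NullSingletonClass μ₁] [NullSingletonClass μ₂]
    (h₁ : Integrable (fun x : ℝ => x) μ₁) (h₂ : Integrable (fun x : ℝ => x) μ₂)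
    (s : ℝ) (hs : (μ₁ (Set.Iic s)).toReal + (μ₂ (Set.Iic s)).toReal = 1)
    (π : Measure (ℝ × ℝ)) (hπ : IsCoupling π μ₁ μ₂)
    (hsupp : msupport π ⊆
      {p : ℝ × ℝ | p.1 ≤ s ∧ s ≤ p.2} ∪ {p : ℝ × ℝ | s ≤ p.1 ∧ p.2 ≤ s}) :
    ∫ p : ℝ × ℝ, min p.1 p.2 ∂π =
      (∫ x in Set.Iic s, x ∂μ₁) + ∫ y in Set.Iic s, y ∂μ₂ :=
  stmt13_general μ₁ μ₂ h₁ h₂ s π hπ hsupp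
end
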